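/- arXiv:1408.2133 — 2 statements merged into one kernel-verified Lean document; each statement's English description precedes it below -/
import Mathlib

section
/- In the coordinate Hopf superalgebra of GL(1|1) with generators c_{11}, c_{22} (even, invertible) and c_{12}, c_{21} (odd), the comultiplication satisfies Δ(c^λ c_{21} c_{12}) = c^{λ+ε_1} c_{21} ⊗ c^{λ+ε_1} c_{12} − c^{λ+ε_2} c_{12} ⊗ c^{λ+ε_2} c_{21} + c^λ c_{21} c_{12} ⊗ c^{λ+ε_1+ε_2} + c^{λ+ε_1+ε_2} ⊗ c^λ c_{21} c_{12} + (λ_1 − λ_2) c^λ c_{21} c_{12} ⊗ c^λ c_{21} c_{12}, where c^λ = c_{11}^{λ_1} c_{22}^{λ_2}. -/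
/-!
Write `Δ c₁₁ = c₁₁ ⊗ c₁₁ + N₁` and `Δ c₂₂ = c₂₂ ⊗ c₂₂ + N₂` with `N₁ = c₁₂ ⊗ c₂₁`,
`N₂ = c₂₁ ⊗ c₁₂`. Each `Nᵢ` squares to zero and commutes with the even part, so
`Δ (c₁₁ ^ n) = c₁₁ ^ n ⊗ c₁₁ ^ n + n (c₁₁ ^ (n - 1) ⊗ c₁₁ ^ (n - 1)) N₁` for all `n : ℤ`, and
likewise for `c₂₂`. Expanding `Δ (c₂₁ c₁₂)` into four terms, the Koszul signs give
`N₁ Δ (c₂₁ c₁₂) = (c₁₁ ⊗ c₁₁) P` and `N₂ Δ (c₂₁ c₁₂) = -(c₂₂ ⊗ c₂₂) P` with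
`P = c₂₁ c₁₂ ⊗ c₂₁ c₁₂`, while `Nᵢ P = 0`. Hence
`Δ (c^λ) Δ (c₂₁ c₁₂) = (c^λ ⊗ c^λ) (Δ (c₂₁ c₁₂) + (λ₁ - λ₂) P)`.
-/

theorem Units.val_zpow_eq_add_of_mul_self_eq_zero {B : Type*} [Ring B] {w d : Bˣ} {N : B}
    (hw : (w : B) = d + N) (hN : N * N = 0) (hdN : Commute (d : B) N) (n : ℤ) :
    ((w ^ n : Bˣ) : B) = ↑(d ^ n) + n • (↑(d ^ (n - 1)) * N) := by
  have step (k : ℤ) : (↑(d ^ k) + k • (↑(d ^ (k - 1)) * N)) * (w : B) =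
      ↑(d ^ (k + 1)) + (k + 1) • (↑(d ^ k) * N) := by
    have hd : (↑(d ^ (k - 1)) : B) * d = ↑(d ^ k) := by
      rw [← Units.val_mul, ← zpow_add_one, sub_add_cancel]
    rw [hw, zpow_add_one, Units.val_mul, add_mul, mul_add, mul_add, smul_mul_assoc,
      smul_mul_assoc, mul_assoc, ← hdN.eq, ← mul_assoc, hd, mul_assoc, hN, mul_zero, smul_zero,
      add_zero, add_smul, one_smul]
    abel
  induction n using Int.induction_on with
  | zero => simp
  | succ k ih => rw [zpow_add_one, Units.val_mul, ih, step, add_sub_cancel_right]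
  | pred k ih =>
    apply w.isUnit.mul_right_cancel
    rw [← Units.val_mul, ← zpow_add_one, sub_add_cancel, ih, step, sub_add_cancel]

theorem RingHom.map_units_zpow {A B : Type*} [Ring A] [Ring B] (f : A →+* B) (u : Aˣ) (n : ℤ) :
    f ↑(u ^ n) = ↑(Units.map (f : A →* B) u ^ n) := by
  rw [← map_zpow, Units.coe_map]; rfl

namespace SuperTensor

variable {A B : Type*} [Ring A] [Ring B] {L R : A →+* B}

variable (L R) in
/-- With `L a = a ⊗ 1` and `R b = 1 ⊗ b`, the Koszul sign rule for an even element `e`. -/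
def IsEven (e : A) : Prop := ∀ z, Commute (R z) (L e) ∧ Commute (R e) (L z)

theorem IsEven.mul {x y : A} (hx : IsEven L R x) (hy : IsEven L R y) : IsEven L R (x * y) :=
  fun z => ⟨by rw [map_mul]; exact (hx z).1.mul_right (hy z).1,
    by rw [map_mul]; exact (hx z).2.mul_left (hy z).2⟩

theorem IsEven.units_zpow {u : Aˣ} (hu : IsEven L R u) (n : ℤ) : IsEven L R ↑(u ^ n) :=
  fun z => ⟨by rw [L.map_units_zpow]; exact (hu z).1.units_zpow_right n,
    by rw [R.map_units_zpow]; exact (hu z).2.units_zpow_left n⟩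

theorem tmul_mul_tmul_of_commute {a b c d : A} (h : Commute (R b) (L c)) :
    L a * R b * (L c * R d) = L (a * c) * R (b * d) := by
  rw [map_mul, map_mul, mul_assoc, ← mul_assoc (R b), h.eq]
  simp only [mul_assoc]

theorem tmul_mul_tmul_of_anticommute {a b c d : A} (h : R b * L c = -(L c * R b)) :
    L a * R b * (L c * R d) = -(L (a * c) * R (b * d)) := by
  rw [map_mul, map_mul, mul_assoc, ← mul_assoc (R b), h]
  simp only [mul_assoc, neg_mul, mul_neg]

theorem anticommute_mul_left_of_isEven {b c e : A} (he : IsEven L R e)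
    (h : R b * L c = -(L c * R b)) : R b * L (e * c) = -(L (e * c) * R b) := by
  rw [map_mul, ← mul_assoc, (he b).1.eq, mul_assoc, h]
  simp only [mul_assoc, mul_neg]

theorem commute_mul_of_anticommute {b c c' : A} (h : R b * L c = -(L c * R b))
    (h' : R b * L c' = -(L c' * R b)) : Commute (R b) (L (c * c')) := by
  rw [Commute, SemiconjBy, map_mul, ← mul_assoc, h, neg_mul, mul_assoc, h']
  simp only [mul_assoc, mul_neg, neg_neg]

theorem commute_tmul_self {x y y' : A} (hx : IsEven L R x) (hy : Commute x y)
    (hy' : Commute x y') : Commute (L x * R x) (L y * R y') :=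
  ((hy.map L).mul_left (hx y).2).mul_right ((hx y').1.symm.mul_left (hy'.map R))

variable (L R)

theorem map_units_zpow_of_map_eq_add (Δ : A →+* B) {u : Aˣ} {N : B}
    (hΔ : Δ u = L u * R u + N) (hu : Commute (R u) (L u)) (hN : N * N = 0)
    (huN : Commute (L u * R u) N) (n : ℤ) :
    Δ ↑(u ^ n) = L ↑(u ^ n) * R ↑(u ^ n) + n • (L ↑(u ^ (n - 1)) * R ↑(u ^ (n - 1)) * N) := by
  have hLR : Commute (Units.map (L : A →* B) u) (Units.map (R : A →* B) u) := Units.ext hu.symm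
  have hE (k : ℤ) : L ↑(u ^ k) * R ↑(u ^ k) =
      ↑((Units.map (L : A →* B) u * Units.map (R : A →* B) u) ^ k) := by
    rw [hLR.mul_zpow, Units.val_mul, L.map_units_zpow, R.map_units_zpow]
  rw [Δ.map_units_zpow, hE, hE]
  exact Units.val_zpow_eq_add_of_mul_self_eq_zero hΔ hN huN n

theorem map_units_zpow_mul_of_map_eq_add (Δ : A →+* B) {u : Aˣ} {N X Y : B}
    (hΔ : Δ u = L u * R u + N) (hu : Commute (R u) (L u)) (hN : N * N = 0)
    (huN : Commute (L u * R u) N) (hX : N * X = L u * R u * Y) (n : ℤ) :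
    Δ ↑(u ^ n) * X = L ↑(u ^ n) * R ↑(u ^ n) * (X + n • Y) := by
  have hE : L ↑(u ^ (n - 1)) * R ↑(u ^ (n - 1)) * (L u * R u) = L ↑(u ^ n) * R ↑(u ^ n) := by
    have h : Commute (R ↑(u ^ (n - 1))) (L u) := by
      rw [R.map_units_zpow]; exact Commute.units_zpow_left hu (n - 1)
    rw [tmul_mul_tmul_of_commute h, ← Units.val_mul, ← zpow_add_one, sub_add_cancel]
  rw [map_units_zpow_of_map_eq_add L R Δ hΔ hu hN huN, add_mul, smul_mul_assoc, mul_assoc _ N,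
    hX, ← mul_assoc, hE, mul_add, mul_smul_comm]

end SuperTensor

open SuperTensor

structure IsGL11Comul {A B : Type*} [Ring A] [Ring B] (Δ L R : A →+* B) (u11 u22 : Aˣ)
    (c12 c21 : A) : Prop where
  c12_mul_self : c12 * c12 = 0
  c21_mul_self : c21 * c21 = 0
  c12_mul_c21 : c12 * c21 = -(c21 * c12)
  commute_u11_c12 : Commute (u11 : A) c12
  commute_u11_c21 : Commute (u11 : A) c21
  commute_u22_c12 : Commute (u22 : A) c12
  commute_u22_c21 : Commute (u22 : A) c21
  commute_u11_u22 : Commute (u11 : A) u22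
  isEven_u11 : IsEven L R u11
  isEven_u22 : IsEven L R u22
  swap_c12_c12 : R c12 * L c12 = -(L c12 * R c12)
  swap_c12_c21 : R c12 * L c21 = -(L c21 * R c12)
  swap_c21_c12 : R c21 * L c12 = -(L c12 * R c21)
  swap_c21_c21 : R c21 * L c21 = -(L c21 * R c21)
  comul_u11 : Δ u11 = L u11 * R u11 + L c12 * R c21
  comul_u22 : Δ u22 = L u22 * R u22 + L c21 * R c12
  comul_c12 : Δ c12 = L u11 * R c12 + L c12 * R u22
  comul_c21 : Δ c21 = L c21 * R u11 + L u22 * R c21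

namespace IsGL11Comul

variable {A B : Type*} [Ring A] [Ring B] {Δ L R : A →+* B} {u11 u22 : Aˣ} {c12 c21 : A}

theorem c12_mul_c21_mul_c12 (h : IsGL11Comul Δ L R u11 u22 c12 c21) : c12 * (c21 * c12) = 0 := by
  rw [← mul_assoc, h.c12_mul_c21, neg_mul, mul_assoc, h.c12_mul_self, mul_zero, neg_zero]

theorem c21_mul_c21_mul_c12 (h : IsGL11Comul Δ L R u11 u22 c12 c21) : c21 * (c21 * c12) = 0 := by
  rw [← mul_assoc, h.c21_mul_self, zero_mul]

theorem comul_c21_mul_c12 (h : IsGL11Comul Δ L R u11 u22 c12 c21) :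
    Δ (c21 * c12) = L (u11 * c21) * R (u11 * c12) - L (u22 * c12) * R (u22 * c21)
      + L (c21 * c12) * R (u11 * u22) + L (u11 * u22) * R (c21 * c12) := by
  rw [map_mul, h.comul_c21, h.comul_c12]
  simp only [add_mul, mul_add]
  rw [tmul_mul_tmul_of_commute (h.isEven_u11 _).1, tmul_mul_tmul_of_commute (h.isEven_u11 _).2,
    tmul_mul_tmul_of_commute (h.isEven_u11 _).1, tmul_mul_tmul_of_anticommute h.swap_c21_c12,
    ← h.commute_u11_c21.eq, ← h.commute_u22_c21.eq, h.commute_u11_u22.eq]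
  abel

theorem c12_tmul_c21_mul_comul_c21_mul_c12 (h : IsGL11Comul Δ L R u11 u22 c12 c21) :
    L c12 * R c21 * Δ (c21 * c12) = L u11 * R u11 * (L (c21 * c12) * R (c21 * c12)) := by
  rw [h.comul_c21_mul_c12]
  simp only [mul_add, mul_sub]
  rw [tmul_mul_tmul_of_anticommute (anticommute_mul_left_of_isEven h.isEven_u11 h.swap_c21_c21),
    tmul_mul_tmul_of_anticommute (anticommute_mul_left_of_isEven h.isEven_u22 h.swap_c21_c12),
    tmul_mul_tmul_of_commute (commute_mul_of_anticommute h.swap_c21_c21 h.swap_c21_c12),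
    tmul_mul_tmul_of_commute ((h.isEven_u11.mul h.isEven_u22) _).1,
    tmul_mul_tmul_of_commute (h.isEven_u11 _).2,
    h.commute_u11_c12.symm.left_comm, h.commute_u11_c21.symm.left_comm,
    h.commute_u22_c12.symm.left_comm, h.c12_mul_c21, h.c12_mul_self, h.c12_mul_c21_mul_c12,
    h.c21_mul_c21_mul_c12]
  simp

theorem c21_tmul_c12_mul_comul_c21_mul_c12 (h : IsGL11Comul Δ L R u11 u22 c12 c21) :
    L c21 * R c12 * Δ (c21 * c12) = L u22 * R u22 * -(L (c21 * c12) * R (c21 * c12)) := by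
  rw [h.comul_c21_mul_c12]
  simp only [mul_add, mul_sub]
  rw [tmul_mul_tmul_of_anticommute (anticommute_mul_left_of_isEven h.isEven_u11 h.swap_c12_c21),
    tmul_mul_tmul_of_anticommute (anticommute_mul_left_of_isEven h.isEven_u22 h.swap_c12_c12),
    tmul_mul_tmul_of_commute (commute_mul_of_anticommute h.swap_c12_c21 h.swap_c12_c12),
    tmul_mul_tmul_of_commute ((h.isEven_u11.mul h.isEven_u22) _).1, mul_neg,
    tmul_mul_tmul_of_commute (h.isEven_u22 _).2,
    h.commute_u11_c21.symm.left_comm, h.commute_u22_c21.symm.left_comm,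
    h.commute_u22_c12.symm.left_comm, h.c12_mul_c21, h.c21_mul_self, h.c12_mul_c21_mul_c12,
    h.c21_mul_c21_mul_c12]
  simp

theorem c12_tmul_c21_mul_tmul_c21_mul_c12 (h : IsGL11Comul Δ L R u11 u22 c12 c21) :
    L c12 * R c21 * (L (c21 * c12) * R (c21 * c12)) = 0 := by
  rw [tmul_mul_tmul_of_commute (commute_mul_of_anticommute h.swap_c21_c21 h.swap_c21_c12),
    h.c21_mul_c21_mul_c12, map_zero, mul_zero]

theorem c21_tmul_c12_mul_tmul_c21_mul_c12 (h : IsGL11Comul Δ L R u11 u22 c12 c21) :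
    L c21 * R c12 * (L (c21 * c12) * R (c21 * c12)) = 0 := by
  rw [tmul_mul_tmul_of_commute (commute_mul_of_anticommute h.swap_c12_c21 h.swap_c12_c12),
    h.c21_mul_c21_mul_c12, map_zero, zero_mul]

theorem c12_tmul_c21_mul_self (h : IsGL11Comul Δ L R u11 u22 c12 c21) :
    L c12 * R c21 * (L c12 * R c21) = 0 := by
  rw [tmul_mul_tmul_of_anticommute h.swap_c21_c12, h.c12_mul_self, map_zero, zero_mul, neg_zero]

theorem c21_tmul_c12_mul_self (h : IsGL11Comul Δ L R u11 u22 c12 c21) :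
    L c21 * R c12 * (L c21 * R c12) = 0 := by
  rw [tmul_mul_tmul_of_anticommute h.swap_c12_c21, h.c21_mul_self, map_zero, zero_mul, neg_zero]

theorem commute_map_units_zpow_u11_tmul_u22_zpow (h : IsGL11Comul Δ L R u11 u22 c12 c21)
    (n m : ℤ) : Commute (Δ ↑(u11 ^ n)) (L ↑(u22 ^ m) * R ↑(u22 ^ m)) := by
  rw [Δ.map_units_zpow]
  refine Commute.units_zpow_left ?_ n
  have hu : Commute (↑(u22 ^ m) : A) u11 := h.commute_u11_u22.symm.units_zpow_left m
  have h12 : Commute (↑(u22 ^ m) : A) c12 := h.commute_u22_c12.units_zpow_left m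
  have h21 : Commute (↑(u22 ^ m) : A) c21 := h.commute_u22_c21.units_zpow_left m
  rw [Units.coe_map, MonoidHom.coe_coe, h.comul_u11]
  exact ((commute_tmul_self (h.isEven_u22.units_zpow m) hu hu).add_right
    (commute_tmul_self (h.isEven_u22.units_zpow m) h12 h21)).symm

theorem comul_zpow_mul_comul_c21_mul_c12 (h : IsGL11Comul Δ L R u11 u22 c12 c21) (n m : ℤ) :
    Δ ↑(u11 ^ n * u22 ^ m) * Δ (c21 * c12) = L ↑(u11 ^ n * u22 ^ m) * R ↑(u11 ^ n * u22 ^ m) *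
      (Δ (c21 * c12) + (n - m) • (L (c21 * c12) * R (c21 * c12))) := by
  set D := Δ (c21 * c12)
  set P := L (c21 * c12) * R (c21 * c12)
  have h22 : Δ ↑(u22 ^ m) * D = L ↑(u22 ^ m) * R ↑(u22 ^ m) * (D + m • -P) :=
    map_units_zpow_mul_of_map_eq_add L R Δ h.comul_u22 (h.isEven_u22 _).1 h.c21_tmul_c12_mul_self
      (commute_tmul_self h.isEven_u22 h.commute_u22_c21 h.commute_u22_c12)
      h.c21_tmul_c12_mul_comul_c21_mul_c12 m
  have h11 : Δ ↑(u11 ^ n) * (D + m • -P) = L ↑(u11 ^ n) * R ↑(u11 ^ n) * (D + m • -P + n • P) :=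
    map_units_zpow_mul_of_map_eq_add L R Δ h.comul_u11 (h.isEven_u11 _).1 h.c12_tmul_c21_mul_self
      (commute_tmul_self h.isEven_u11 h.commute_u11_c12 h.commute_u11_c21)
      (by rw [mul_add, mul_smul_comm, mul_neg, h.c12_tmul_c21_mul_comul_c21_mul_c12,
        h.c12_tmul_c21_mul_tmul_c21_mul_c12, neg_zero, smul_zero, add_zero]) n
  have hE : L ↑(u22 ^ m) * R ↑(u22 ^ m) * (L ↑(u11 ^ n) * R ↑(u11 ^ n)) =
      L ↑(u11 ^ n * u22 ^ m) * R ↑(u11 ^ n * u22 ^ m) := by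
    have hu : Commute u11 u22 := Units.ext h.commute_u11_u22
    rw [tmul_mul_tmul_of_commute ((h.isEven_u11.units_zpow n) _).1, ← Units.val_mul,
      ← (hu.zpow_zpow n m).eq]
  calc Δ ↑(u11 ^ n * u22 ^ m) * D = Δ ↑(u11 ^ n) * (Δ ↑(u22 ^ m) * D) := by
        rw [Units.val_mul, map_mul, mul_assoc]
    _ = L ↑(u22 ^ m) * R ↑(u22 ^ m) * (Δ ↑(u11 ^ n) * (D + m • -P)) := by
        rw [h22, ← mul_assoc, (h.commute_map_units_zpow_u11_tmul_u22_zpow n m).eq, mul_assoc]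
    _ = _ := by
        rw [h11, ← mul_assoc, hE, smul_neg, sub_smul]
        congr 1
        abel

theorem tmul_zpow_mul_comul_c21_mul_c12_add (h : IsGL11Comul Δ L R u11 u22 c12 c21) (n m : ℤ) :
    L ↑(u11 ^ n * u22 ^ m) * R ↑(u11 ^ n * u22 ^ m) *
        (Δ (c21 * c12) + (n - m) • (L (c21 * c12) * R (c21 * c12))) =
      L (↑(u11 ^ (n + 1) * u22 ^ m) * c21) * R (↑(u11 ^ (n + 1) * u22 ^ m) * c12)
        - L (↑(u11 ^ n * u22 ^ (m + 1)) * c12) * R (↑(u11 ^ n * u22 ^ (m + 1)) * c21)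
        + L (↑(u11 ^ n * u22 ^ m) * c21 * c12) * R ↑(u11 ^ (n + 1) * u22 ^ (m + 1))
        + L ↑(u11 ^ (n + 1) * u22 ^ (m + 1)) * R (↑(u11 ^ n * u22 ^ m) * c21 * c12)
        + (n - m) • (L (↑(u11 ^ n * u22 ^ m) * c21 * c12) *
            R (↑(u11 ^ n * u22 ^ m) * c21 * c12)) := by
  have hu : Commute u11 u22 := Units.ext h.commute_u11_u22
  have ha : IsEven L R ↑(u11 ^ n * u22 ^ m) := by
    rw [Units.val_mul]; exact (h.isEven_u11.units_zpow n).mul (h.isEven_u22.units_zpow m)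
  have h1 (k : ℤ) : (↑(u11 ^ k * u22 ^ m) : A) * u11 = ↑(u11 ^ (k + 1) * u22 ^ m) := by
    rw [← Units.val_mul, mul_assoc, ← (hu.zpow_right m).eq, ← mul_assoc, ← zpow_add_one]
  have h2 (k l : ℤ) : (↑(u11 ^ k * u22 ^ l) : A) * u22 = ↑(u11 ^ k * u22 ^ (l + 1)) := by
    rw [← Units.val_mul, mul_assoc, ← zpow_add_one]
  rw [h.comul_c21_mul_c12]
  simp only [mul_add, mul_sub, mul_smul_comm, tmul_mul_tmul_of_commute (ha _).2,
    ← mul_assoc (↑(u11 ^ n * u22 ^ m) : A), h1, h2]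

end IsGL11Comul

/-- The comultiplication formula for `c^λ c₂₁ c₁₂` in `K[GL(1|1)]`.  The coordinate
superalgebra `A` has even invertible generators `c₁₁ = ↑u11`, `c₂₂ = ↑u22` and odd
generators `c₁₂, c₂₁` (squaring to zero and anticommuting, the even generators being
central among the generators).  The super tensor product `A ⊗ A` is modelled by an
algebra `B` together with ring homomorphisms `L : a ↦ a⊗1` and `R : b ↦ 1⊗b`
satisfying the Koszul sign rule `(1⊗b)(c⊗1) = (-1)^{|b||c|} c⊗b`, and
`Δ : A → B` is the ring homomorphism with `Δ(c_{ij}) = ∑_k c_{ik} ⊗ c_{kj}`.  Then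
`Δ(c^λ c₂₁ c₁₂) = c^{λ+ε₁}c₂₁ ⊗ c^{λ+ε₁}c₁₂ − c^{λ+ε₂}c₁₂ ⊗ c^{λ+ε₂}c₂₁
 + c^λc₂₁c₁₂ ⊗ c^{λ+ε₁+ε₂} + c^{λ+ε₁+ε₂} ⊗ c^λc₂₁c₁₂
 + (λ₁−λ₂) c^λc₂₁c₁₂ ⊗ c^λc₂₁c₁₂`. -/
theorem comul_formula_gl11 (A B : Type*) [Ring A] [Ring B]
    (u11 u22 : Aˣ) (c12 c21 : A)
    -- relations in K[GL(1|1)]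
    (h12sq : c12 * c12 = 0) (h21sq : c21 * c21 = 0)
    (hanti : c12 * c21 = -(c21 * c12))
    (h1112 : (u11 : A) * c12 = c12 * u11) (h1121 : (u11 : A) * c21 = c21 * u11)
    (h2212 : (u22 : A) * c12 = c12 * u22) (h2221 : (u22 : A) * c21 = c21 * u22)
    (huu : (u11 : A) * u22 = (u22 : A) * u11)
    -- the super tensor product and the comultiplication
    (Δ L R : A →+* B)
    (s1 : R c12 * L c12 = -(L c12 * R c12)) (s2 : R c12 * L c21 = -(L c21 * R c12))
    (s3 : R c21 * L c12 = -(L c12 * R c21)) (s4 : R c21 * L c21 = -(L c21 * R c21))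
    (e1 : ∀ a : A, R a * L (u11 : A) = L (u11 : A) * R a)
    (e2 : ∀ a : A, R a * L (u22 : A) = L (u22 : A) * R a)
    (e3 : ∀ a : A, R (u11 : A) * L a = L a * R (u11 : A))
    (e4 : ∀ a : A, R (u22 : A) * L a = L a * R (u22 : A))
    (d11 : Δ (u11 : A) = L (u11 : A) * R (u11 : A) + L c12 * R c21)
    (d12 : Δ c12 = L (u11 : A) * R c12 + L c12 * R (u22 : A))
    (d21 : Δ c21 = L c21 * R (u11 : A) + L (u22 : A) * R c21)
    (d22 : Δ (u22 : A) = L c21 * R c12 + L (u22 : A) * R (u22 : A)) :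
    ∀ lam : ℤ × ℤ,
      Δ (((u11 ^ lam.1 * u22 ^ lam.2 : Aˣ) : A) * c21 * c12) =
        L (((u11 ^ (lam.1 + 1) * u22 ^ lam.2 : Aˣ) : A) * c21) *
            R (((u11 ^ (lam.1 + 1) * u22 ^ lam.2 : Aˣ) : A) * c12)
          - L (((u11 ^ lam.1 * u22 ^ (lam.2 + 1) : Aˣ) : A) * c12) *
              R (((u11 ^ lam.1 * u22 ^ (lam.2 + 1) : Aˣ) : A) * c21)
          + L (((u11 ^ lam.1 * u22 ^ lam.2 : Aˣ) : A) * c21 * c12) *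
              R ((u11 ^ (lam.1 + 1) * u22 ^ (lam.2 + 1) : Aˣ) : A)
          + L ((u11 ^ (lam.1 + 1) * u22 ^ (lam.2 + 1) : Aˣ) : A) *
              R (((u11 ^ lam.1 * u22 ^ lam.2 : Aˣ) : A) * c21 * c12)
          + (lam.1 - lam.2) •
              (L (((u11 ^ lam.1 * u22 ^ lam.2 : Aˣ) : A) * c21 * c12) *
                R (((u11 ^ lam.1 * u22 ^ lam.2 : Aˣ) : A) * c21 * c12)) := by
  have h : IsGL11Comul Δ L R u11 u22 c12 c21 :=
    { c12_mul_self := h12sq, c21_mul_self := h21sq, c12_mul_c21 := hanti,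
      commute_u11_c12 := h1112, commute_u11_c21 := h1121, commute_u22_c12 := h2212,
      commute_u22_c21 := h2221, commute_u11_u22 := huu,
      isEven_u11 := fun z => ⟨e1 z, e3 z⟩, isEven_u22 := fun z => ⟨e2 z, e4 z⟩,
      swap_c12_c12 := s1, swap_c12_c21 := s2, swap_c21_c12 := s3, swap_c21_c21 := s4,
      comul_u11 := d11, comul_u22 := d22.trans (add_comm _ _), comul_c12 := d12,
      comul_c21 := d21 }
  intro lam
  have hsplit : Δ (↑(u11 ^ lam.1 * u22 ^ lam.2) * c21 * c12) =
      Δ ↑(u11 ^ lam.1 * u22 ^ lam.2) * Δ (c21 * c12) := by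
    rw [mul_assoc, map_mul]
  rw [hsplit, h.comul_zpow_mul_comul_c21_mul_c12, h.tmul_zpow_mul_comul_c21_mul_c12_add]
end

section
/- Let q be a power of a prime p, let X = {0,…,q-1}² and |λ| = λ_1+λ_2. Consider the system of linear equations over a field K of characteristic p in unknowns {a_λ, b_λ : λ ∈ X}: b_{σ(λ)} − b_λ = |λ| a_λ for all λ ∈ X, where σ(λ) is the coordinatewise reduction mod q of λ + (1,−1). Then the orbits of σ on X are exactly the sets O_t = {λ ∈ X : |λ| ≡ t mod q} for 0 ≤ t ≤ q−1, each of size q, and: if p | t the solutions restricted to O_t are given by all b_λ (λ ∈ O_t) equal to a common constant and a_λ arbitrary with |λ|a_λ = 0; if p ∤ t the solution space restricted to O_t has dimension q, parametrized by free choice of (b_λ)_{λ∈O_t} with a_λ = (b_{σ(λ)} − b_λ)/|λ|. -/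
/-- The shift map `σ(λ) = (λ₁+1 mod q, λ₂-1 mod q)` on `X = (ℤ/q)²`. -/
def shiftMap (q : ℕ) (l : ZMod q × ZMod q) : ZMod q × ZMod q :=
  (l.1 + 1, l.2 - 1)

/-- `|λ| = λ₁ + λ₂` computed from the representatives in `{0,…,q-1}`. -/
def wtSum (q : ℕ) (l : ZMod q × ZMod q) : ℕ := l.1.val + l.2.val

lemma shiftMap_iterate (q : ℕ) (l : ZMod q × ZMod q) (n : ℕ) :
    (shiftMap q)^[n] l = (l.1 + n, l.2 - n) := by
  induction n with
  | zero => simp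
  | succ n ih =>
    rw [Function.iterate_succ_apply', ih, shiftMap]
    push_cast
    refine Prod.ext ?_ ?_ <;> simp <;> ring

lemma shift_sum (q : ℕ) (l : ZMod q × ZMod q) :
    (shiftMap q l).1 + (shiftMap q l).2 = l.1 + l.2 := by
  simp [shiftMap]

lemma wt_modeq (q : ℕ) [NeZero q] (t : ℕ) (l : ZMod q × ZMod q)
    (hl : l.1 + l.2 = (t : ZMod q)) : wtSum q l ≡ t [MOD q] := by
  have : ((wtSum q l : ℕ) : ZMod q) = (t : ZMod q) := by
    rw [wtSum]; push_cast
    simpa [ZMod.natCast_val, ZMod.cast_id] using hl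
  exact (ZMod.natCast_eq_natCast_iff _ _ _).mp this

/-- Let `q = p^r` and `K` a field of characteristic `p`.  Consider the system
`b_{σ(λ)} − b_λ = |λ| a_λ` (for `λ ∈ X = {0,…,q-1}²`) over `K`.  Then the orbits of
`σ` on `X` are exactly the sets `O_t = {λ : λ₁+λ₂ ≡ t mod q}` for `0 ≤ t ≤ q−1`,
each of size `q`; if `p ∣ t`, the solutions restricted to `O_t` are exactly those
with all `b_λ` (`λ ∈ O_t`) equal (and `a_λ` arbitrary, `|λ| a_λ = 0` holding
automatically); if `p ∤ t`, for every free choice of `(b_λ)` there is a unique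
solution `(a_λ)` on `O_t` (vanishing off `O_t`), given by
`a_λ = (b_{σ(λ)} − b_λ)/|λ|`. -/
theorem invariants_linear_system (p r q : ℕ) (hp : p.Prime) (hr : 1 ≤ r)
    (hq : q = p ^ r) (K : Type*) [Field K] [CharP K p] :
    -- the orbits of σ are the sets O_t
    (∀ l m : ZMod q × ZMod q,
      (∃ n : ℕ, (shiftMap q)^[n] l = m) ↔ l.1 + l.2 = m.1 + m.2) ∧
    -- each orbit has exactly q elements
    (∀ t : ZMod q, Nat.card {l : ZMod q × ZMod q // l.1 + l.2 = t} = q) ∧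
    -- the case p ∣ t
    (∀ t : ℕ, t < q → p ∣ t → ∀ a b : ZMod q × ZMod q → K,
      ((∀ l : ZMod q × ZMod q, l.1 + l.2 = (t : ZMod q) →
          b (shiftMap q l) - b l = (wtSum q l : K) * a l) ↔
        (∀ l m : ZMod q × ZMod q, l.1 + l.2 = (t : ZMod q) →
          m.1 + m.2 = (t : ZMod q) → b l = b m))) ∧
    (∀ t : ℕ, t < q → p ∣ t → ∀ l : ZMod q × ZMod q,
      l.1 + l.2 = (t : ZMod q) → (wtSum q l : K) = 0) ∧
    -- the case p ∤ t
    (∀ t : ℕ, t < q → ¬ p ∣ t → ∀ b : ZMod q × ZMod q → K,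
      ∃! a : ZMod q × ZMod q → K,
        (∀ l : ZMod q × ZMod q, l.1 + l.2 = (t : ZMod q) →
          b (shiftMap q l) - b l = (wtSum q l : K) * a l) ∧
        (∀ l : ZMod q × ZMod q, l.1 + l.2 = (t : ZMod q) →
          a l = (b (shiftMap q l) - b l) / (wtSum q l : K)) ∧
        (∀ l : ZMod q × ZMod q, ¬ l.1 + l.2 = (t : ZMod q) → a l = 0)) := by
  have hq0 : q ≠ 0 := by
    subst hq; exact pow_ne_zero r hp.pos.ne'
  haveI : NeZero q := ⟨hq0⟩
  have hpq : p ∣ q := by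
    subst hq; exact dvd_pow_self p (by omega)
  have part1 : ∀ l m : ZMod q × ZMod q,
      (∃ n : ℕ, (shiftMap q)^[n] l = m) ↔ l.1 + l.2 = m.1 + m.2 := by
    intro l m
    constructor
    · rintro ⟨n, rfl⟩
      rw [shiftMap_iterate]
      show l.1 + l.2 = (l.1 + n) + (l.2 - n)
      ring
    · intro h
      refine ⟨(m.1 - l.1).val, ?_⟩
      rw [shiftMap_iterate]
      have h1 : (((m.1 - l.1).val : ℕ) : ZMod q) = m.1 - l.1 := by
        simp [ZMod.natCast_val, ZMod.cast_id]
      rw [h1]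
      refine Prod.ext ?_ ?_
      · show l.1 + (m.1 - l.1) = m.1
        ring
      · show l.2 - (m.1 - l.1) = m.2
        linear_combination h
  have key : ∀ t : ℕ, ∀ l : ZMod q × ZMod q, l.1 + l.2 = (t : ZMod q) →
      ((p ∣ t) ↔ ((wtSum q l : K) = 0)) := by
    intro t l hl
    have h1 := wt_modeq q t l hl
    have h2 : wtSum q l ≡ t [MOD p] := h1.of_dvd hpq
    rw [CharP.cast_eq_zero_iff K p]
    constructor
    · intro ht
      exact Nat.modEq_zero_iff_dvd.mp
        (h2.trans (Nat.modEq_zero_iff_dvd.mpr ht))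
    · intro hw
      exact Nat.modEq_zero_iff_dvd.mp
        (h2.symm.trans (Nat.modEq_zero_iff_dvd.mpr hw))
  refine ⟨part1, ?_, ?_, fun t ht hpt l hl => (key t l hl).mp hpt, ?_⟩
  · intro t
    have e : {l : ZMod q × ZMod q // l.1 + l.2 = t} ≃ ZMod q :=
      { toFun := fun x => x.1.1
        invFun := fun x => ⟨(x, t - x), by ring⟩
        left_inv := fun x => Subtype.ext (Prod.ext rfl (by
          show t - x.1.1 = x.1.2
          linear_combination - x.2))
        right_inv := fun x => rfl }
    rw [Nat.card_congr e, Nat.card_zmod]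
  · intro t ht hpt a b
    constructor
    · intro hb l m hl hm
      have step : ∀ x : ZMod q × ZMod q, x.1 + x.2 = (t : ZMod q) →
          b (shiftMap q x) = b x := by
        intro x hx
        have h := hb x hx
        rw [(key t x hx).mp hpt, zero_mul] at h
        exact sub_eq_zero.mp h
      have iter : ∀ n : ℕ, b ((shiftMap q)^[n] l) = b l := by
        intro n
        induction n with
        | zero => rfl
        | succ n ih =>
          have hs : ((shiftMap q)^[n] l).1 + ((shiftMap q)^[n] l).2
              = (t : ZMod q) := by
            rw [shiftMap_iterate]
            show (l.1 + n) + (l.2 - n) = (t : ZMod q)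
            linear_combination hl
          rw [Function.iterate_succ_apply', step _ hs, ih]
      obtain ⟨n, hn⟩ := (part1 l m).mpr (by rw [hl, hm])
      rw [← hn, iter]
    · intro hb l hl
      have h1 : b (shiftMap q l) = b l :=
        hb _ _ (by rw [shift_sum]; exact hl) hl
      rw [h1, (key t l hl).mp hpt, zero_mul, sub_self]
  · intro t ht hpt b
    refine ⟨fun l => if l.1 + l.2 = (t : ZMod q) then
        (b (shiftMap q l) - b l) / (wtSum q l : K) else 0, ⟨?_, ?_, ?_⟩, ?_⟩
    · intro l hl
      have hw : (wtSum q l : K) ≠ 0 := fun h => hpt ((key t l hl).mpr h)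
      dsimp only
      rw [if_pos hl, mul_comm, div_mul_cancel₀ _ hw]
    · intro l hl
      dsimp only
      rw [if_pos hl]
    · intro l hl
      dsimp only
      rw [if_neg hl]
    · rintro a' ⟨h1, h2, h3⟩
      funext l
      by_cases hl : l.1 + l.2 = (t : ZMod q)
      · simp only [if_pos hl, h2 l hl]
      · simp only [if_neg hl, h3 l hl]
end
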